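/- Let a < b be real numbers and λ ∈ [1/2, 1). Define f, g : [a,b] → [a,b] by f(x) = a + λ(x − a) and g(x) = b − λ(b − x). Then [a,b] is the unique minimal set of IFS(f,g): for every x ∈ [a,b], the closure of the orbit O(x) equals [a,b]. -/

import Mathlib

/-!
Both maps are contractions of ratio `λ < 1` of `[a,b]` into itself, and since `λ ≥ 1/2` their
images cover `[a,b]`. Iterating the covering, every `y ∈ [a,b]` is `φ(z)` for some `z ∈ [a,b]`
and some word `φ` of any prescribed length `k`; then `|y - φ(x)| ≤ λᵏ (b - a)`, which is as
small as we like.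
-/

open Set Topology Filter

/-- The circle. -/
abbrev S1 := AddCircle (1 : ℝ)

/-- Apply a word `l = [i₁, …, i_k]` of generators: `f i₁ ∘ ⋯ ∘ f i_k`. -/
def applyWord {X : Type*} {n : ℕ} (f : Fin n → X → X) (l : List (Fin n)) (x : X) : X :=
  l.foldr (fun i y => f i y) x

/-- The orbit of `x` under the semigroup `IFS(f₁,…,fₙ)` (nonempty words). -/
def orbitIFS {X : Type*} {n : ℕ} (f : Fin n → X → X) (x : X) : Set X :=
  {y | ∃ l : List (Fin n), l ≠ [] ∧ y = applyWord f l x}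

/-- `M` is a minimal set for the IFS generated by `f₁,…,fₙ`. -/
def IsMinimalIFS {X : Type*} [TopologicalSpace X] {n : ℕ} (f : Fin n → X → X)
    (M : Set X) : Prop :=
  M.Nonempty ∧ IsClosed M ∧ (∀ i, f i '' M ⊆ M) ∧
    ∀ x ∈ M, closure (orbitIFS f x) = M

/-- A Cantor set: nonempty, compact, perfect and totally disconnected. -/
def IsCantorSet {X : Type*} [TopologicalSpace X] (K : Set X) : Prop :=
  K.Nonempty ∧ IsCompact K ∧ Perfect K ∧ IsTotallyDisconnected K

/-- `X` is (homeomorphic to) the circle or a (nondegenerate) closed interval. -/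
def IsCircleOrInterval (X : Type*) [TopologicalSpace X] : Prop :=
  Nonempty (X ≃ₜ S1) ∨ ∃ a b : ℝ, a < b ∧ Nonempty (X ≃ₜ Set.Icc a b)

/-- The canonical decomposition `M = 𝓘 ∪ K ∪ N` of a closed set:
`𝓘` is the interior (union of components of the interior), `K` is the maximal
Cantor set contained in `M \ 𝓘` (possibly empty), and `N` is the countable remainder. -/
def IsCanonicalDecomp {X : Type*} [TopologicalSpace X] (M I K N : Set X) : Prop :=
  I = interior M ∧
  (IsCantorSet K ∨ K = ∅) ∧
  K ⊆ M \ I ∧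
  (∀ K₁ : Set X, IsCantorSet K₁ → K ⊆ K₁ → K₁ ⊆ M \ I → K₁ = K) ∧
  N = M \ (I ∪ K) ∧
  N.Countable

/-- A symmetric Cantorval: a nonempty compact set which is the closure of its interior,
and such that both endpoints of every nontrivial connected component are accumulation
points of one-point connected components. -/
def IsSymmetricCantorval {X : Type*} [TopologicalSpace X] (M : Set X) : Prop :=
  M.Nonempty ∧ IsCompact M ∧ M = closure (interior M) ∧
  ∀ x ∈ M, ¬ (connectedComponentIn M x).Subsingleton →
    ∀ z ∈ frontier (connectedComponentIn M x),
      AccPt z (𝓟 {y | y ∈ M ∧ connectedComponentIn M y = {y}})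

open Metric
open scoped NNReal

section IFS

variable {X : Type*} {n : ℕ} (f : Fin n → X → X)

lemma mapsTo_applyWord {s : Set X} (h : ∀ i, MapsTo (f i) s s) (l : List (Fin n)) :
    MapsTo (applyWord f l) s s := by
  induction l with
  | nil => exact mapsTo_id s
  | cons i l ih => exact (h i).comp ih

lemma orbitIFS_subset {s : Set X} (h : ∀ i, MapsTo (f i) s s) {x : X} (hx : x ∈ s) :
    orbitIFS f x ⊆ s := by
  rintro _ ⟨l, -, rfl⟩
  exact mapsTo_applyWord f h l hx

lemma lipschitzWith_applyWord [PseudoEMetricSpace X] {K : ℝ≥0}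
    (h : ∀ i, LipschitzWith K (f i)) (l : List (Fin n)) :
    LipschitzWith (K ^ l.length) (applyWord f l) := by
  induction l with
  | nil => rw [List.length_nil, pow_zero]; exact LipschitzWith.id
  | cons i l ih => rw [List.length_cons, pow_succ']; exact (h i).comp ih

lemma exists_applyWord_eq_of_subset_iUnion_image {s : Set X} (h : s ⊆ ⋃ i, f i '' s) (k : ℕ) :
    ∀ y ∈ s, ∃ l : List (Fin n), l.length = k ∧ ∃ z ∈ s, applyWord f l z = y := by
  induction k with
  | zero => exact fun y hy => ⟨[], rfl, y, hy, rfl⟩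
  | succ k ih =>
    intro y hy
    obtain ⟨i, w, hw, rfl⟩ : ∃ i, ∃ w ∈ s, f i w = y := by simpa using h hy
    obtain ⟨l, rfl, z, hz, rfl⟩ := ih w hw
    exact ⟨i :: l, rfl, z, hz, rfl⟩

theorem closure_orbitIFS_eq [PseudoMetricSpace X] {K : ℝ≥0} {s : Set X} (hK : K < 1)
    (hlip : ∀ i, LipschitzWith K (f i)) (hmaps : ∀ i, MapsTo (f i) s s)
    (hcover : s ⊆ ⋃ i, f i '' s) (hs : IsClosed s) (hbdd : Bornology.IsBounded s)
    {x : X} (hx : x ∈ s) : closure (orbitIFS f x) = s := by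
  refine (closure_minimal (orbitIFS_subset f hmaps hx) hs).antisymm fun y hy ↦
    Metric.mem_closure_iff.2 fun ε hε ↦ ?_
  have hsmall : Tendsto (fun k : ℕ ↦ (K : ℝ) ^ k * diam s) atTop (𝓝 0) := by
    simpa using (tendsto_pow_atTop_nhds_zero_of_lt_one K.coe_nonneg hK).mul_const (diam s)
  obtain ⟨k, hkε, hk⟩ :=
    ((hsmall.eventually (gt_mem_nhds hε)).and (eventually_ge_atTop 1)).exists
  obtain ⟨l, rfl, z, hz, rfl⟩ := exists_applyWord_eq_of_subset_iUnion_image f hcover k y hy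
  refine ⟨applyWord f l x, ⟨l, List.ne_nil_of_length_pos hk, rfl⟩, ?_⟩
  calc dist (applyWord f l z) (applyWord f l x) ≤ K ^ l.length * dist z x := by
        simpa using (lipschitzWith_applyWord f hlip l).dist_le_mul z x
    _ ≤ K ^ l.length * diam s := by gcongr; exact dist_le_diam_of_mem hbdd hz hx
    _ < ε := hkε

end IFS

lemma Icc_subset_image_union_image {α : Type*} [ConditionallyCompleteLinearOrder α]
    [TopologicalSpace α] [OrderTopology α] [DenselyOrdered α] {a b : α} {f g : α → α}
    (hab : a ≤ b) (hf : ContinuousOn f (Icc a b)) (hg : ContinuousOn g (Icc a b))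
    (hfa : f a = a) (hgb : g b = b) (hgf : g a ≤ f b) :
    Icc a b ⊆ f '' Icc a b ∪ g '' Icc a b :=
  calc Icc a b ⊆ Icc a (f b) ∪ Icc (g a) b := fun y hy ↦
        (le_total y (f b)).imp (fun h ↦ ⟨hy.1, h⟩) (fun h ↦ ⟨hgf.trans h, hy.2⟩)
    _ ⊆ f '' Icc a b ∪ g '' Icc a b := union_subset_union
        (by simpa only [hfa] using intermediate_value_Icc hab hf)
        (by simpa only [hgb] using intermediate_value_Icc hab hg)

lemma lipschitzWith_homothety (c : ℝ) (lam : ℝ≥0) :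
    LipschitzWith lam (fun x : ℝ ↦ c + lam * (x - c)) :=
  LipschitzWith.of_dist_le_mul fun x y ↦ by
    simp [Real.dist_eq, ← mul_sub, abs_mul]

lemma mapsTo_homothety_Icc {a b c lam : ℝ} (hc : c ∈ Icc a b) (h0 : 0 ≤ lam)
    (h1 : lam ≤ 1) :
    MapsTo (fun x : ℝ ↦ c + lam * (x - c)) (Icc a b) (Icc a b) := fun x hx ↦ by
  constructor <;> nlinarith [hx.1, hx.2, hc.1, hc.2]

theorem stmt16 (a b lam : ℝ) (hab : a < b) (hlam : 1 / 2 ≤ lam) (hlam1 : lam < 1)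
    (f g : ℝ → ℝ) (hf : ∀ x, f x = a + lam * (x - a)) (hg : ∀ x, g x = b - lam * (b - x)) :
    ∀ x ∈ Set.Icc a b, closure (orbitIFS ![f, g] x) = Set.Icc a b := by
  intro x hx
  lift lam to ℝ≥0 using by linarith
  have hf' : f = fun x ↦ a + lam * (x - a) := funext hf
  have hg' : g = fun x ↦ b + lam * (x - b) := funext fun x ↦ by rw [hg]; ring
  have hcover : Icc a b ⊆ f '' Icc a b ∪ g '' Icc a b :=
    Icc_subset_image_union_image hab.le (by rw [hf']; fun_prop) (by rw [hg']; fun_prop)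
      (by simp [hf]) (by simp [hg]) (by rw [hf, hg]; nlinarith)
  refine closure_orbitIFS_eq _ (K := lam) (by exact_mod_cast hlam1)
    (Fin.forall_fin_two.2
      ⟨hf' ▸ lipschitzWith_homothety a lam, hg' ▸ lipschitzWith_homothety b lam⟩)
    (Fin.forall_fin_two.2 ⟨hf' ▸ mapsTo_homothety_Icc (left_mem_Icc.2 hab.le) lam.2 hlam1.le,
      hg' ▸ mapsTo_homothety_Icc (right_mem_Icc.2 hab.le) lam.2 hlam1.le⟩)
    (fun y hy ↦ by simpa [Fin.exists_fin_two] using hcover hy)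
    isClosed_Icc (isBounded_Icc a b) hx
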